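/- In the setting of the one-dimensional semi-discrete finite-volume scheme with no-flux boundary conditions (H : [0,∞) → ℝ convex and C¹, values V_i ∈ ℝ, symmetric weights W_j = W_{−j}, ξ_i = H′(ρ_i) + V_i + Δx Σ_k W_{i−k} ρ_k, u_{i+1/2} = −(ξ_{i+1} − ξ_i)/Δx, F_{i+1/2} = ρ_i(u_{i+1/2})⁺ + ρ_{i+1}(u_{i+1/2})⁻ for interior edges, F_{1/2} = F_{N+1/2} = 0, dρ_i/dt = −(F_{i+1/2} − F_{i−1/2})/Δx), let (ρ_i(t)) be a C¹ solution on [0,T] with ρ_i(0) ≥ 0 for all i. Define the semi-discrete free energy F_Δ(t) = Σ_i H(ρ_i(t)) Δx + Σ_i V_i ρ_i(t) Δx + (1/2) Σ_i Σ_k W_{i−k} ρ_i(t) ρ_k(t) Δx². Then for all t ∈ (0,T), d/dt F_Δ(t) ≤ −Σ_{i=1}^{N−1} min{ρ_i(t), ρ_{i+1}(t)} |u_{i+1/2}(t)|² Δx ≤ 0. -/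

import Mathlib

/-!
Two facts about the upwind flux `F_e = ρ_{e-1} u_e⁺ + ρ_e u_e⁻` (with `F_0 = F_N = 0`) hold for an
arbitrary edge velocity `u`. Summation by parts turns `Σ_i χ_i (F_{i+1} - F_i)` into
`Σ_e (χ_{e-1} - χ_e) F_e`. With `χ` the indicator of the cells where the right derivative of the
negative part `(ρ_i)⁻` is active, every edge term is `≤ 0`, because the upwind flux across an edge
points from its nonnegative cell to its nonpositive one; so the total negative mass `Σ_i (ρ_i)⁻`
cannot grow and `ρ` stays nonnegative. With `χ = ξ`, the chain rule and the symmetry of `W` give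
`d/dt F_Δ = Σ_i ξ_i ρ_i' Δx = -Δx Σ_e u_e F_e`, and `u_e F_e ≥ min(ρ_{e-1}, ρ_e) u_e²` edgewise.
-/

open Real Set

noncomputable section

/-- Discrete potential `ξ_i = H′(ρ_i) + V_i + Δx Σ_{k<N} W_{i−k} ρ_k`
(cells are indexed by `i = 0, …, N−1`). -/
def xiSD (N : ℕ) (Δx : ℝ) (H' : ℝ → ℝ) (V : ℕ → ℝ) (W : ℤ → ℝ)
    (ρ : ℕ → ℝ) (i : ℕ) : ℝ :=
  H' (ρ i) + V i + Δx * ∑ k ∈ Finset.range N, W ((i : ℤ) - (k : ℤ)) * ρ k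

/-- Discrete velocity at the edge `e` between cells `e−1` and `e`
(for `1 ≤ e ≤ N−1`): `u_{e−1/2+1} = −(ξ_e − ξ_{e−1})/Δx`. -/
def velSD (N : ℕ) (Δx : ℝ) (H' : ℝ → ℝ) (V : ℕ → ℝ) (W : ℤ → ℝ)
    (ρ : ℕ → ℝ) (e : ℕ) : ℝ :=
  -(xiSD N Δx H' V W ρ e - xiSD N Δx H' V W ρ (e - 1)) / Δx

/-- Upwind flux at edge `e`; the no-flux boundary conditions impose
`F_0 = F_N = 0`, and at interior edges
`F_e = ρ_{e−1} (u_e)⁺ + ρ_e (u_e)⁻` with `(s)⁺ = max{s,0}`, `(s)⁻ = min{s,0}`. -/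
def fluxSD (N : ℕ) (Δx : ℝ) (H' : ℝ → ℝ) (V : ℕ → ℝ) (W : ℤ → ℝ)
    (ρ : ℕ → ℝ) (e : ℕ) : ℝ :=
  if e = 0 ∨ N ≤ e then 0
  else ρ (e - 1) * max (velSD N Δx H' V W ρ e) 0
        + ρ e * min (velSD N Δx H' V W ρ e) 0

/-- The semi-discrete free energy
`F_Δ = Σ_i H(ρ_i) Δx + Σ_i V_i ρ_i Δx + (1/2) Σ_i Σ_k W_{i−k} ρ_i ρ_k Δx²`. -/
def FdiscSD (N : ℕ) (Δx : ℝ) (H : ℝ → ℝ) (V : ℕ → ℝ) (W : ℤ → ℝ)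
    (ρ : ℕ → ℝ) : ℝ :=
  (∑ i ∈ Finset.range N, H (ρ i) * Δx) + (∑ i ∈ Finset.range N, V i * ρ i * Δx)
    + (1 / 2) * ∑ i ∈ Finset.range N, ∑ k ∈ Finset.range N,
        W ((i : ℤ) - (k : ℤ)) * ρ i * ρ k * Δx ^ 2

open Topology Asymptotics

theorem sum_range_mul_succ_sub_eq {R : Type*} [CommRing R] (χ F : ℕ → R) (N : ℕ) :
    ∑ i ∈ Finset.range N, χ i * (F (i + 1) - F i)
      = χ (N - 1) * F N - χ 0 * F 0 + ∑ e ∈ Finset.Ico 1 N, (χ (e - 1) - χ e) * F e := by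
  induction N with
  | zero => simp
  | succ n ih =>
    rw [Finset.sum_range_succ, ih]
    rcases Nat.eq_zero_or_pos n with rfl | hn
    · simp [mul_sub]
    · rw [Finset.sum_Ico_succ_top hn, Nat.add_sub_cancel]
      ring

theorem min_mul_sq_le_mul_upwind (a b u : ℝ) :
    min a b * u ^ 2 ≤ u * (a * max u 0 + b * min u 0) := by
  rcases le_total 0 u with hu | hu
  · rw [max_eq_left hu, min_eq_right hu]
    nlinarith [min_le_left a b, sq_nonneg u]
  · rw [max_eq_right hu, min_eq_left hu]
    nlinarith [min_le_right a b, sq_nonneg u]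

theorem exists_hasDerivWithinAt_Ici_max_neg_zero {f : ℝ → ℝ} {f' a : ℝ}
    (hf : HasDerivWithinAt f f' (Ici a) a) :
    ∃ c : ℝ, (c = 0 ∧ 0 ≤ f a ∨ c = 1 ∧ f a ≤ 0) ∧
      HasDerivWithinAt (fun s => max (-f s) 0) (-(c * f')) (Ici a) a := by
  rcases lt_trichotomy (f a) 0 with hneg | hzero | hpos
  · refine ⟨1, Or.inr ⟨rfl, hneg.le⟩, ?_⟩
    rw [one_mul]
    refine hf.neg.congr_of_eventuallyEq ?_ (max_eq_left (by linarith))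
    filter_upwards [hf.continuousWithinAt (Iio_mem_nhds hneg)] with s hs
    exact max_eq_left (by linarith [show f s < 0 from hs])
  · -- `max · 0` is 1-Lipschitz, and `max (-((s - a) f')) 0 = (s - a) max (-f') 0` for `s ≥ a`
    have hderiv : HasDerivWithinAt (fun s => max (-f s) 0) (max (-f') 0) (Ici a) a := by
      rw [hasDerivWithinAt_iff_isLittleO] at hf ⊢
      refine IsBigO.trans_isLittleO (IsBigO.of_bound 1 ?_) hf
      filter_upwards [self_mem_nhdsWithin] with s (hs : a ≤ s)
      have hlin : (s - a) * max (-f') 0 = max (-((s - a) * f')) 0 := by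
        rw [mul_max_of_nonneg _ _ (sub_nonneg.2 hs), mul_zero, mul_neg]
      simp only [hzero, neg_zero, max_self, sub_zero, smul_eq_mul, hlin, one_mul, norm_eq_abs]
      calc |max (-f s) 0 - max (-((s - a) * f')) 0| ≤ |-f s - -((s - a) * f')| :=
            abs_max_sub_max_le_abs _ _ _
        _ = |f s - (s - a) * f'| := by rw [← abs_neg]; ring_nf
    rcases le_total f' 0 with hf' | hf'
    · exact ⟨1, Or.inr ⟨rfl, hzero.le⟩, hderiv.congr_deriv (by simp [hf'])⟩
    · exact ⟨0, Or.inl ⟨rfl, hzero.ge⟩, hderiv.congr_deriv (by simp [hf'])⟩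
  · refine ⟨0, Or.inl ⟨rfl, hpos.le⟩, ?_⟩
    rw [zero_mul, neg_zero]
    refine (hasDerivWithinAt_const a _ 0).congr_of_eventuallyEq ?_ (max_eq_right (by linarith))
    filter_upwards [hf.continuousWithinAt (Ioi_mem_nhds hpos)] with s hs
    exact max_eq_right (by linarith [show 0 < f s from hs])

theorem le_of_forall_hasDerivWithinAt_Ici_nonpos {f : ℝ → ℝ} {a b : ℝ}
    (hf : ContinuousOn f (Icc a b))
    (hf' : ∀ x ∈ Ico a b, ∃ d ≤ 0, HasDerivWithinAt f d (Ici x) x) :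
    ∀ x ∈ Icc a b, f x ≤ f a := by
  choose! d hd_nonpos hd using hf'
  exact image_le_of_deriv_right_le_deriv_boundary hf hd le_rfl continuousOn_const
    (fun x _ => hasDerivWithinAt_const x _ (f a)) hd_nonpos

def upwindFlux (N : ℕ) (u ρ : ℕ → ℝ) (e : ℕ) : ℝ :=
  if e = 0 ∨ N ≤ e then 0 else ρ (e - 1) * max (u e) 0 + ρ e * min (u e) 0

theorem fluxSD_eq_upwindFlux (N : ℕ) (Δx : ℝ) (H' : ℝ → ℝ) (V : ℕ → ℝ) (W : ℤ → ℝ)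
    (ρ : ℕ → ℝ) : fluxSD N Δx H' V W ρ = upwindFlux N (velSD N Δx H' V W ρ) ρ :=
  rfl

section upwind

variable {N : ℕ} {u ρ : ℕ → ℝ}

theorem upwindFlux_zero : upwindFlux N u ρ 0 = 0 := by
  simp [upwindFlux]

theorem upwindFlux_of_le {e : ℕ} (he : N ≤ e) : upwindFlux N u ρ e = 0 := by
  simp [upwindFlux, he]

theorem upwindFlux_of_mem_Ico {e : ℕ} (he : e ∈ Finset.Ico 1 N) :
    upwindFlux N u ρ e = ρ (e - 1) * max (u e) 0 + ρ e * min (u e) 0 := by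
  rw [Finset.mem_Ico] at he
  rw [upwindFlux, if_neg (by omega)]

theorem sum_mul_upwindFlux_sub (χ : ℕ → ℝ) :
    ∑ i ∈ Finset.range N, χ i * (upwindFlux N u ρ (i + 1) - upwindFlux N u ρ i)
      = ∑ e ∈ Finset.Ico 1 N, (χ (e - 1) - χ e) * upwindFlux N u ρ e := by
  rw [sum_range_mul_succ_sub_eq, upwindFlux_zero, upwindFlux_of_le le_rfl]
  ring

theorem sum_mul_upwindFlux_sub_nonpos {c : ℕ → ℝ}
    (hc : ∀ i < N, c i = 0 ∧ 0 ≤ ρ i ∨ c i = 1 ∧ ρ i ≤ 0) :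
    ∑ i ∈ Finset.range N, c i * (upwindFlux N u ρ (i + 1) - upwindFlux N u ρ i) ≤ 0 := by
  rw [sum_mul_upwindFlux_sub]
  refine Finset.sum_nonpos fun e he => ?_
  rw [upwindFlux_of_mem_Ico he]
  have he' := Finset.mem_Ico.1 he
  have hpos := le_max_right (u e) 0
  have hneg := min_le_right (u e) 0
  rcases hc (e - 1) (by omega) with ⟨hl, hρl⟩ | ⟨hl, hρl⟩ <;>
    rcases hc e he'.2 with ⟨hr, hρr⟩ | ⟨hr, hρr⟩ <;> rw [hl, hr]
  · simp
  · nlinarith [mul_nonneg hρl hpos, mul_nonneg_of_nonpos_of_nonpos hρr hneg]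
  · nlinarith [mul_nonpos_of_nonpos_of_nonneg hρl hpos, mul_nonpos_of_nonneg_of_nonpos hρr hneg]
  · simp

end upwind

theorem upwindFlux_solution_nonneg {N : ℕ} {Δx T : ℝ} (hΔx : 0 < Δx) {u ρ : ℝ → ℕ → ℝ}
    (hODE : ∀ t ∈ Icc (0 : ℝ) T, ∀ i < N, HasDerivWithinAt (fun s => ρ s i)
      (-(upwindFlux N (u t) (ρ t) (i + 1) - upwindFlux N (u t) (ρ t) i) / Δx) (Icc 0 T) t)
    (h0 : ∀ i < N, 0 ≤ ρ 0 i) :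
    ∀ t ∈ Icc (0 : ℝ) T, ∀ i < N, 0 ≤ ρ t i := by
  set negMass : ℝ → ℝ := fun t => ∑ i ∈ Finset.range N, max (-ρ t i) 0
  have hcont : ContinuousOn negMass (Icc 0 T) := by
    refine continuousOn_finsetSum _ fun i hi t ht => ?_
    exact ((hODE t ht i (Finset.mem_range.1 hi)).continuousWithinAt.neg).sup
      continuousWithinAt_const
  have hderiv : ∀ x ∈ Ico (0 : ℝ) T, ∃ d ≤ 0, HasDerivWithinAt negMass d (Ici x) x := by
    intro x hx
    have hnhds : Icc (0 : ℝ) T ∈ 𝓝[≥] x :=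
      Filter.mem_of_superset (Icc_mem_nhdsGE hx.2) (Icc_subset_Icc_left hx.1)
    have hneg_part : ∀ i ∈ Finset.range N, ∃ c : ℝ, (c = 0 ∧ 0 ≤ ρ x i ∨ c = 1 ∧ ρ x i ≤ 0) ∧
        HasDerivWithinAt (fun s => max (-ρ s i) 0)
          (-(c * (-(upwindFlux N (u x) (ρ x) (i + 1) - upwindFlux N (u x) (ρ x) i) / Δx)))
          (Ici x) x := fun i hi =>
      exists_hasDerivWithinAt_Ici_max_neg_zero
        ((hODE x (Ico_subset_Icc_self hx) i (Finset.mem_range.1 hi)).mono_of_mem_nhdsWithin hnhds)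
    choose! c hc hci using hneg_part
    refine ⟨_, ?_, HasDerivWithinAt.fun_sum hci⟩
    have hsum := sum_mul_upwindFlux_sub_nonpos (u := u x)
      fun i hi => hc i (Finset.mem_range.2 hi)
    calc ∑ i ∈ Finset.range N,
          -(c i * (-(upwindFlux N (u x) (ρ x) (i + 1) - upwindFlux N (u x) (ρ x) i) / Δx))
        = (∑ i ∈ Finset.range N,
            c i * (upwindFlux N (u x) (ρ x) (i + 1) - upwindFlux N (u x) (ρ x) i)) / Δx := by
          rw [Finset.sum_div]
          exact Finset.sum_congr rfl fun i _ => by ring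
      _ ≤ 0 := div_nonpos_of_nonpos_of_nonneg hsum hΔx.le
  have hnegMass_zero : negMass 0 = 0 :=
    Finset.sum_eq_zero fun i hi => max_eq_right (neg_nonpos.2 (h0 i (Finset.mem_range.1 hi)))
  intro t ht i hi
  have hnegMass_le := le_of_forall_hasDerivWithinAt_Ici_nonpos hcont hderiv t ht
  have hterm : max (-ρ t i) 0 ≤ negMass t :=
    Finset.single_le_sum (fun j _ => le_max_right (-ρ t j) 0) (Finset.mem_range.2 hi)
  linarith [le_max_left (-ρ t i) 0]

theorem sum_sum_mul_mul_comm_of_symm {R : Type*} [CommRing R] {W : ℤ → R}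
    (hW : ∀ j : ℤ, W (-j) = W j) (f g : ℕ → R) (N : ℕ) :
    ∑ i ∈ Finset.range N, ∑ k ∈ Finset.range N, W ((i : ℤ) - (k : ℤ)) * f i * g k
      = ∑ i ∈ Finset.range N, ∑ k ∈ Finset.range N, W ((i : ℤ) - (k : ℤ)) * g i * f k := by
  rw [Finset.sum_comm]
  refine Finset.sum_congr rfl fun i _ => Finset.sum_congr rfl fun k _ => ?_
  rw [← hW, neg_sub]
  ring

theorem hasDerivWithinAt_FdiscSD {N : ℕ} {Δx : ℝ} {H H' : ℝ → ℝ} {V : ℕ → ℝ} {W : ℤ → ℝ}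
    (hW : ∀ j : ℤ, W (-j) = W j) {ρ : ℝ → ℕ → ℝ} {r : ℕ → ℝ} {s D : Set ℝ} {t : ℝ}
    (hρ : ∀ i < N, HasDerivWithinAt (fun τ => ρ τ i) (r i) s t)
    (hmaps : ∀ i < N, MapsTo (fun τ => ρ τ i) s D)
    (hH : ∀ i < N, HasDerivWithinAt H (H' (ρ t i)) D (ρ t i)) :
    HasDerivWithinAt (fun τ => FdiscSD N Δx H V W (ρ τ))
      (∑ i ∈ Finset.range N, xiSD N Δx H' V W (ρ t) i * r i * Δx) s t := by
  have hρ' : ∀ i ∈ Finset.range N, HasDerivWithinAt (fun τ => ρ τ i) (r i) s t :=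
    fun i hi => hρ i (Finset.mem_range.1 hi)
  have hentropy := HasDerivWithinAt.fun_sum fun i hi =>
    ((hH i (Finset.mem_range.1 hi)).comp t (hρ' i hi)
      (hmaps i (Finset.mem_range.1 hi))).mul_const Δx
  have hpotential := HasDerivWithinAt.fun_sum fun i hi => ((hρ' i hi).const_mul (V i)).mul_const Δx
  have hinteraction := (HasDerivWithinAt.fun_sum fun (i : ℕ) hi =>
    HasDerivWithinAt.fun_sum fun (k : ℕ) hk =>
    (((hρ' i hi).const_mul (W ((i : ℤ) - (k : ℤ)))).mul (hρ' k hk)).mul_const (Δx ^ 2)).const_mul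
      (1 / 2 : ℝ)
  refine ((hentropy.add hpotential).add hinteraction).congr_deriv ?_
  have hswap := sum_sum_mul_mul_comm_of_symm hW (ρ t) r N
  calc _ = ∑ i ∈ Finset.range N, H' (ρ t i) * r i * Δx + ∑ i ∈ Finset.range N, V i * r i * Δx
        + (∑ i ∈ Finset.range N, ∑ k ∈ Finset.range N, W ((i : ℤ) - (k : ℤ)) * r i * ρ t k)
          * Δx ^ 2 := by
        simp only [add_mul, Finset.sum_add_distrib, ← Finset.sum_mul]
        rw [hswap]
        ring
    _ = _ := by
        simp only [xiSD, add_mul, Finset.sum_add_distrib, Finset.mul_sum, Finset.sum_mul]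
        congr 1
        refine Finset.sum_congr rfl fun i _ => Finset.sum_congr rfl fun k _ => ?_
        ring

theorem xiSD_sub_xiSD_eq_mul_velSD {N : ℕ} {Δx : ℝ} (hΔx : Δx ≠ 0) (H' : ℝ → ℝ) (V : ℕ → ℝ)
    (W : ℤ → ℝ) (ρ : ℕ → ℝ) (e : ℕ) :
    xiSD N Δx H' V W ρ (e - 1) - xiSD N Δx H' V W ρ e = Δx * velSD N Δx H' V W ρ e := by
  rw [velSD]
  field_simp
  ring

theorem sum_xiSD_mul_fluxSD_sub_le {N : ℕ} {Δx : ℝ} (hΔx : 0 < Δx) (H' : ℝ → ℝ) (V : ℕ → ℝ)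
    (W : ℤ → ℝ) (ρ : ℕ → ℝ) :
    ∑ i ∈ Finset.range N, xiSD N Δx H' V W ρ i *
        (-(fluxSD N Δx H' V W ρ (i + 1) - fluxSD N Δx H' V W ρ i) / Δx) * Δx
      ≤ -∑ e ∈ Finset.Ico 1 N, min (ρ (e - 1)) (ρ e) * velSD N Δx H' V W ρ e ^ 2 * Δx := by
  rw [fluxSD_eq_upwindFlux]
  set ξ := xiSD N Δx H' V W ρ
  set u := velSD N Δx H' V W ρ
  calc _ = -∑ i ∈ Finset.range N, ξ i * (upwindFlux N u ρ (i + 1) - upwindFlux N u ρ i) := by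
        rw [← Finset.sum_neg_distrib]
        exact Finset.sum_congr rfl fun i _ => by field_simp
    _ = -∑ e ∈ Finset.Ico 1 N, Δx * (u e * upwindFlux N u ρ e) := by
        rw [sum_mul_upwindFlux_sub]
        simp only [xiSD_sub_xiSD_eq_mul_velSD hΔx.ne', mul_assoc, ξ, u]
    _ ≤ _ := by
        refine neg_le_neg (Finset.sum_le_sum fun e he => ?_)
        rw [upwindFlux_of_mem_Ico he, mul_comm Δx]
        exact mul_le_mul_of_nonneg_right (min_mul_sq_le_mul_upwind _ _ _) hΔx.le

theorem semidiscrete_energy_dissipation_general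
    (N : ℕ) (Δx T : ℝ) (hΔx : 0 < Δx)
    (H H' : ℝ → ℝ)
    (hH' : ∀ s ∈ Ici (0 : ℝ), HasDerivWithinAt H (H' s) (Ici 0) s)
    (V : ℕ → ℝ) (W : ℤ → ℝ) (hWsymm : ∀ j : ℤ, W (-j) = W j)
    (ρ : ℝ → ℕ → ℝ)
    (hODE : ∀ t ∈ Icc (0 : ℝ) T, ∀ i < N,
      HasDerivWithinAt (fun s => ρ s i)
        (-(fluxSD N Δx H' V W (ρ t) (i + 1) - fluxSD N Δx H' V W (ρ t) i) / Δx)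
        (Icc 0 T) t)
    (h0 : ∀ i < N, 0 ≤ ρ 0 i) :
    ∀ t ∈ Ioo (0 : ℝ) T, ∃ D : ℝ,
      HasDerivAt (fun s => FdiscSD N Δx H V W (ρ s)) D t ∧
      D ≤ -(∑ e ∈ Finset.Ico 1 N,
            min (ρ t (e - 1)) (ρ t e) * (velSD N Δx H' V W (ρ t) e) ^ 2 * Δx) ∧
      -(∑ e ∈ Finset.Ico 1 N,
            min (ρ t (e - 1)) (ρ t e) * (velSD N Δx H' V W (ρ t) e) ^ 2 * Δx) ≤ 0 := by
  intro t ht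
  have htT : t ∈ Icc (0 : ℝ) T := Ioo_subset_Icc_self ht
  have hnonneg : ∀ τ ∈ Icc (0 : ℝ) T, ∀ i < N, 0 ≤ ρ τ i :=
    upwindFlux_solution_nonneg hΔx (by simpa only [fluxSD_eq_upwindFlux] using hODE) h0
  have hderiv := hasDerivWithinAt_FdiscSD (Δx := Δx) (V := V) hWsymm (hODE t htT)
    (fun i hi τ hτ => hnonneg τ hτ i hi) (fun i hi => hH' _ (hnonneg t htT i hi))
  refine ⟨_, hderiv.hasDerivAt (Icc_mem_nhds ht.1 ht.2),
    sum_xiSD_mul_fluxSD_sub_le hΔx H' V W (ρ t), neg_nonpos.2 (Finset.sum_nonneg fun e he => ?_)⟩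
  have he' := Finset.mem_Ico.1 he
  have hmin := le_min (hnonneg t htT (e - 1) (by omega)) (hnonneg t htT e he'.2)
  exact mul_nonneg (mul_nonneg hmin (sq_nonneg _)) hΔx.le

/-- Semi-discrete energy dissipation. Along a `C¹` solution of
the semi-discrete finite-volume scheme with nonnegative initial data, the
semi-discrete free energy satisfies, for `t ∈ (0,T)`,
`d/dt F_Δ(t) ≤ −Σ_{e=1}^{N−1} min{ρ_{e−1}(t), ρ_e(t)} |u_e(t)|² Δx ≤ 0`. -/
theorem semidiscrete_energy_dissipation
    (N : ℕ) (hN : 2 ≤ N) (Δx T : ℝ) (hΔx : 0 < Δx) (hT : 0 < T)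
    (H H' : ℝ → ℝ) (hHconv : ConvexOn ℝ (Ici 0) H)
    (hH' : ∀ s ∈ Ici (0 : ℝ), HasDerivWithinAt H (H' s) (Ici 0) s)
    (hH'cont : ContinuousOn H' (Ici 0))
    (V : ℕ → ℝ) (W : ℤ → ℝ) (hWsymm : ∀ j : ℤ, W (-j) = W j)
    (ρ : ℝ → ℕ → ℝ)
    (hC1 : ∀ i < N, ContDiffOn ℝ 1 (fun t => ρ t i) (Icc 0 T))
    (hODE : ∀ t ∈ Icc (0 : ℝ) T, ∀ i < N,
      HasDerivWithinAt (fun s => ρ s i)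
        (-(fluxSD N Δx H' V W (ρ t) (i + 1) - fluxSD N Δx H' V W (ρ t) i) / Δx)
        (Icc 0 T) t)
    (h0 : ∀ i < N, 0 ≤ ρ 0 i) :
    ∀ t ∈ Ioo (0 : ℝ) T, ∃ D : ℝ,
      HasDerivAt (fun s => FdiscSD N Δx H V W (ρ s)) D t ∧
      D ≤ -(∑ e ∈ Finset.Ico 1 N,
            min (ρ t (e - 1)) (ρ t e) * (velSD N Δx H' V W (ρ t) e) ^ 2 * Δx) ∧
      -(∑ e ∈ Finset.Ico 1 N,
            min (ρ t (e - 1)) (ρ t e) * (velSD N Δx H' V W (ρ t) e) ^ 2 * Δx) ≤ 0 :=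
  semidiscrete_energy_dissipation_general N Δx T hΔx H H' hH' V W hWsymm ρ hODE h0
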